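/- Let a ≥ 1 and b ≥ 2 be integers, and let x ∈ Λ^{a+b} be a point whose coordinates x_1,…,x_{a+b} are linearly independent over the rationals. If T_{a,b}^k(x) does not converge to (0,…,0) as k → ∞, then there exists an integer k ≥ 1 such that T_{a,b}^k(x) ∈ A. -/

import Mathlib

open MeasureTheory Filter Topology

/-- `Λⁿ`: points of `ℝⁿ` with nonnegative, nondecreasing coordinates. -/
def Lambda (n : ℕ) : Set (Fin n → ℝ) := {x | (∀ i, 0 ≤ x i) ∧ Monotone x}

/-- The vector `(x₁,…,x_a, x_{a+1}-x_a,…,x_{a+b}-x_a)` (0-based indexing). -/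
noncomputable def subVec (a b : ℕ) (x : Fin (a + b) → ℝ) : Fin (a + b) → ℝ :=
  fun j => if (j : ℕ) < a then x j else x j - x ⟨a - 1, by have := j.isLt; omega⟩

/-- The map `T_{a,b}`: nondecreasing rearrangement of `subVec a b x`. -/
noncomputable def Tab (a b : ℕ) (x : Fin (a + b) → ℝ) : Fin (a + b) → ℝ :=
  subVec a b x ∘ Tuple.sort (subVec a b x)

/-!
Write `p = x_a` for the pivot coordinate and `m = x_{a+b}` for the largest one (0-based in the
code: indices `a - 1` and `a + b - 1`). One application of `T_{a,b}` lowers `σ` by `b·p`, so the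
pivots along the orbit are summable and tend to `0`, while `m` is nonincreasing and, unless the
orbit tends to `0`, stays above some `M > 0`. If the orbit avoided `A`, then
`b·m < σ ≤ a·p + x_{a+1} + (b - 1)·m` would give `x_{a+1} > m - a·p`; once `(a + 2)·p ≤ M` this
forces `x_{a+1} ≥ 2p`, so the difference vector is already sorted and `T_{a,b}` leaves `p`
unchanged. The pivot would then be eventually constant with limit `0`, hence `0`, although
`T_{a,b}` preserves the `ℚ`-span of the coordinates and so keeps them `ℚ`-independent and nonzero.
-/

theorem LinearIndependent.of_span_range_eq {R M ι : Type*} [DivisionRing R] [AddCommGroup M]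
    [Module R M] [Fintype ι] {v w : ι → M} (hv : LinearIndependent R v)
    (hspan : Submodule.span R (Set.range w) = Submodule.span R (Set.range v)) :
    LinearIndependent R w := by
  rw [linearIndependent_iff_card_eq_finrank_span, Set.finrank, hspan]
  exact linearIndependent_iff_card_eq_finrank_span.mp hv

theorem le_of_mem_Lambda {n : ℕ} {y : Fin n → ℝ} (hy : y ∈ Lambda n) {i j : Fin n}
    (hij : (i : ℕ) ≤ j) : y i ≤ y j :=
  hy.2 (Fin.le_def.mpr hij)

theorem le_last_of_mem_Lambda {n : ℕ} {y : Fin n → ℝ} (hy : y ∈ Lambda n) (i : Fin n)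
    {j : Fin n} (hj : (j : ℕ) = n - 1) : y i ≤ y j :=
  le_of_mem_Lambda hy (by have := i.isLt; omega)

variable {a b : ℕ}

theorem subVec_of_lt (y : Fin (a + b) → ℝ) {j : Fin (a + b)} (h : (j : ℕ) < a) :
    subVec a b y j = y j := if_pos h

theorem subVec_of_le (y : Fin (a + b) → ℝ) {j : Fin (a + b)} (h : a ≤ j) :
    subVec a b y j = y j - y ⟨a - 1, by have := j.isLt; omega⟩ := if_neg (not_lt.mpr h)

theorem sum_Tab (ha : 1 ≤ a) (y : Fin (a + b) → ℝ) :
    ∑ i, Tab a b y i = ∑ i, y i - b * y ⟨a - 1, by omega⟩ := by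
  have shifted (i : Fin b) : subVec a b y (Fin.natAdd a i) =
      y (Fin.natAdd a i) - y ⟨a - 1, by omega⟩ := subVec_of_le y (Fin.le_coe_natAdd _ _)
  simp only [Tab, Function.comp_apply]
  rw [Equiv.sum_comp (Tuple.sort (subVec a b y)) (subVec a b y), Fin.sum_univ_add,
    Fin.sum_univ_add (f := y), Finset.sum_congr rfl fun i _ => shifted i]
  simp [subVec_of_lt y (Fin.castAdd_lt _ _)]
  ring

theorem subVec_nonneg {y : Fin (a + b) → ℝ} (hy : y ∈ Lambda (a + b)) (j : Fin (a + b)) :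
    0 ≤ subVec a b y j := by
  by_cases h : (j : ℕ) < a
  · rw [subVec_of_lt y h]
    exact hy.1 j
  · rw [subVec_of_le y (not_lt.mp h), sub_nonneg]
    exact le_of_mem_Lambda hy (by simp only; omega)

theorem subVec_le {y : Fin (a + b) → ℝ} (hy : y ∈ Lambda (a + b)) (j : Fin (a + b)) :
    subVec a b y j ≤ y j := by
  by_cases h : (j : ℕ) < a
  · rw [subVec_of_lt y h]
  · rw [subVec_of_le y (not_lt.mp h), sub_le_self_iff]
    exact hy.1 _

theorem Tab_mem_Lambda {y : Fin (a + b) → ℝ} (hy : y ∈ Lambda (a + b)) :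
    Tab a b y ∈ Lambda (a + b) :=
  ⟨fun _ => subVec_nonneg hy _, Tuple.monotone_sort _⟩

theorem Tab_le_last {y : Fin (a + b) → ℝ} (hy : y ∈ Lambda (a + b)) (i : Fin (a + b))
    {j : Fin (a + b)} (hj : (j : ℕ) = a + b - 1) : Tab a b y i ≤ y j :=
  (subVec_le hy _).trans (le_last_of_mem_Lambda hy _ hj)

theorem span_range_subVec {R : Type*} [Ring R] [Module R ℝ] (ha : 1 ≤ a)
    (y : Fin (a + b) → ℝ) :
    Submodule.span R (Set.range (subVec a b y)) = Submodule.span R (Set.range y) := by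
  set p : Fin (a + b) := ⟨a - 1, by omega⟩
  have hp : subVec a b y p = y p := subVec_of_lt y (by simp only [p]; omega)
  apply le_antisymm <;> rw [Submodule.span_le, Set.range_subset_iff] <;> intro j <;>
    by_cases h : (j : ℕ) < a
  · rw [subVec_of_lt y h]
    exact Submodule.subset_span ⟨j, rfl⟩
  · rw [subVec_of_le y (not_lt.mp h)]
    exact sub_mem (Submodule.subset_span ⟨j, rfl⟩) (Submodule.subset_span ⟨p, rfl⟩)
  · rw [← subVec_of_lt y h]
    exact Submodule.subset_span ⟨j, rfl⟩
  · have hj : y j = subVec a b y j + subVec a b y p := by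
      rw [subVec_of_le y (not_lt.mp h), hp]
      ring
    rw [hj]
    exact add_mem (Submodule.subset_span ⟨j, rfl⟩) (Submodule.subset_span ⟨p, rfl⟩)

theorem LinearIndependent.Tab {R : Type*} [DivisionRing R] [Module R ℝ] (ha : 1 ≤ a)
    {y : Fin (a + b) → ℝ} (hy : LinearIndependent R y) : LinearIndependent R (Tab a b y) :=
  (hy.of_span_range_eq (span_range_subVec ha y)).comp _ (Tuple.sort _).injective

theorem Tab_eq_subVec (hb : 1 ≤ b) {y : Fin (a + b) → ℝ}
    (hy : y ∈ Lambda (a + b)) (hgap : 2 * y ⟨a - 1, by omega⟩ ≤ y ⟨a, by omega⟩) :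
    Tab a b y = subVec a b y := by
  suffices Monotone (subVec a b y) by
    rw [Tab, Tuple.sort_eq_refl_iff_monotone.mpr this]
    rfl
  intro i j hij
  rw [Fin.le_def] at hij
  by_cases hi : (i : ℕ) < a <;> by_cases hj : (j : ℕ) < a
  · rw [subVec_of_lt y hi, subVec_of_lt y hj]
    exact le_of_mem_Lambda hy hij
  · rw [subVec_of_lt y hi, subVec_of_le y (not_lt.mp hj)]
    have hi_le : y i ≤ y ⟨a - 1, by omega⟩ := le_of_mem_Lambda hy (by simp only; omega)
    have hj_ge : y ⟨a, by omega⟩ ≤ y j := le_of_mem_Lambda hy (by simp only; omega)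
    linarith
  · omega
  · rw [subVec_of_le y (not_lt.mp hi), subVec_of_le y (not_lt.mp hj), sub_le_sub_iff_right]
    exact le_of_mem_Lambda hy hij

theorem Tab_pivot_eq_of_two_mul_le (ha : 1 ≤ a) (hb : 1 ≤ b) {y : Fin (a + b) → ℝ}
    (hy : y ∈ Lambda (a + b)) (hgap : 2 * y ⟨a - 1, by omega⟩ ≤ y ⟨a, by omega⟩) :
    Tab a b y ⟨a - 1, by omega⟩ = y ⟨a - 1, by omega⟩ := by
  rw [Tab_eq_subVec hb hy hgap, subVec_of_lt y (by simp only; omega)]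

theorem sum_le_of_mem_Lambda (hb : 1 ≤ b) {y : Fin (a + b) → ℝ} (hy : y ∈ Lambda (a + b)) :
    ∑ i, y i ≤ a * y ⟨a - 1, by omega⟩ + y ⟨a, by omega⟩ +
      (b - 1) * y ⟨a + b - 1, by omega⟩ := by
  obtain ⟨c, rfl⟩ : ∃ c, b = c + 1 := ⟨b - 1, by omega⟩
  rw [Fin.sum_univ_add, Fin.sum_univ_succ, ← add_assoc]
  have head : ∑ i : Fin a, y (Fin.castAdd (c + 1) i) ≤ a * y ⟨a - 1, by omega⟩ := by
    have := Finset.sum_le_card_nsmul Finset.univ _ _ fun (i : Fin a) _ =>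
      le_of_mem_Lambda hy (i := Fin.castAdd (c + 1) i) (j := ⟨a - 1, by omega⟩)
        (by simp only [Fin.val_castAdd]; omega)
    rwa [Finset.card_univ, Fintype.card_fin, nsmul_eq_mul] at this
  have tail : ∑ i : Fin c, y (Fin.natAdd a i.succ) ≤ c * y ⟨a + (c + 1) - 1, by omega⟩ := by
    have := Finset.sum_le_card_nsmul Finset.univ _ _ fun (i : Fin c) _ =>
      le_last_of_mem_Lambda hy (Fin.natAdd a i.succ) (j := ⟨a + (c + 1) - 1, by omega⟩) rfl
    rwa [Finset.card_univ, Fintype.card_fin, nsmul_eq_mul] at this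
  push_cast
  simp only [add_sub_cancel_right]
  exact add_le_add (add_le_add head le_rfl) tail

theorem Tab_pivot_eq_of_lt_sum (ha : 1 ≤ a) (hb : 1 ≤ b) {y : Fin (a + b) → ℝ}
    (hy : y ∈ Lambda (a + b)) (hsum : b * y ⟨a + b - 1, by omega⟩ < ∑ i, y i)
    (hsmall : (a + 2) * y ⟨a - 1, by omega⟩ ≤ y ⟨a + b - 1, by omega⟩) :
    Tab a b y ⟨a - 1, by omega⟩ = y ⟨a - 1, by omega⟩ := by
  refine Tab_pivot_eq_of_two_mul_le ha hb hy ?_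
  have := sum_le_of_mem_Lambda hb hy
  linarith

theorem iterate_Tab_mem_Lambda {x : Fin (a + b) → ℝ} (hx : x ∈ Lambda (a + b)) (k : ℕ) :
    (Tab a b)^[k] x ∈ Lambda (a + b) :=
  Set.MapsTo.iterate (fun _ => Tab_mem_Lambda) k hx

theorem iterate_Tab_linearIndependent {R : Type*} [DivisionRing R] [Module R ℝ] (ha : 1 ≤ a)
    {x : Fin (a + b) → ℝ} (hx : LinearIndependent R x) (k : ℕ) :
    LinearIndependent R ((Tab a b)^[k] x) :=
  Set.MapsTo.iterate (s := {y | LinearIndependent R y}) (fun _ => LinearIndependent.Tab ha) k hx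

theorem tendsto_iterate_Tab_pivot (ha : 1 ≤ a) (hb : 1 ≤ b) {x : Fin (a + b) → ℝ}
    (hx : x ∈ Lambda (a + b)) :
    Tendsto (fun k => (Tab a b)^[k] x ⟨a - 1, by omega⟩) atTop (𝓝 0) := by
  set s : ℕ → ℝ := fun k => ∑ i, (Tab a b)^[k] x i
  set c : ℕ → ℝ := fun k => (Tab a b)^[k] x ⟨a - 1, by omega⟩
  have hc : ∀ k, 0 ≤ c k := fun k => (iterate_Tab_mem_Lambda hx k).1 _
  have step (k : ℕ) : b * c k = s k - s (k + 1) := by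
    simp only [s, c, Function.iterate_succ_apply', sum_Tab ha]
    ring
  have partial_sum (n : ℕ) : ∑ k ∈ Finset.range n, c k ≤ s 0 := calc
    ∑ k ∈ Finset.range n, c k ≤ ∑ k ∈ Finset.range n, b * c k :=
      Finset.sum_le_sum fun k _ => le_mul_of_one_le_left (hc k) (by exact_mod_cast hb)
    _ = s 0 - s n := by simp only [step, Finset.sum_range_sub']
    _ ≤ s 0 := sub_le_self _ (Finset.sum_nonneg fun i _ => (iterate_Tab_mem_Lambda hx n).1 i)
  exact (summable_of_sum_range_le hc partial_sum).tendsto_atTop_zero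

theorem exists_pos_le_iterate_Tab_last (hb : 1 ≤ b) {x : Fin (a + b) → ℝ}
    (hx : x ∈ Lambda (a + b)) (hnot : ¬ Tendsto (fun k => (Tab a b)^[k] x) atTop (𝓝 0)) :
    ∃ M > 0, ∀ k, M ≤ (Tab a b)^[k] x ⟨a + b - 1, by omega⟩ := by
  set m : ℕ → ℝ := fun k => (Tab a b)^[k] x ⟨a + b - 1, by omega⟩
  have hL := iterate_Tab_mem_Lambda hx
  have hm : ∀ k, 0 ≤ m k := fun k => (hL k).1 _
  have bdd : BddBelow (Set.range m) := ⟨0, Set.forall_mem_range.mpr hm⟩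
  have anti : Antitone m := antitone_nat_of_succ_le fun k => by
    simp only [m, Function.iterate_succ_apply']
    exact Tab_le_last (hL k) _ rfl
  refine ⟨⨅ k, m k, ?_, ciInf_le bdd⟩
  by_contra! hinf
  have hm0 : Tendsto m atTop (𝓝 0) :=
    le_antisymm hinf (le_ciInf hm) ▸ tendsto_atTop_ciInf anti bdd
  exact hnot <| tendsto_pi_nhds.mpr fun i =>
    squeeze_zero (fun k => (hL k).1 i) (fun k => le_last_of_mem_Lambda (hL k) i rfl) hm0

/-- if the coordinates of `x ∈ Λ^{a+b}` are rationally
independent and the orbit does not converge to the origin, then some iterate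
`T_{a,b}^k(x)`, `k ≥ 1`, lies in `A = {x ∈ Λ^{a+b} : σ(x) ≤ b·x_{a+b}}`. -/
theorem statement13 (a b : ℕ) (ha : 1 ≤ a) (hb : 2 ≤ b)
    (x : Fin (a + b) → ℝ) (hx : x ∈ Lambda (a + b))
    (hind : LinearIndependent ℚ x)
    (hnot : ¬ Tendsto (fun k => (Tab a b)^[k] x) atTop (𝓝 0)) :
    ∃ k : ℕ, 1 ≤ k ∧ (Tab a b)^[k] x ∈ Lambda (a + b) ∧
      ∑ i, (Tab a b)^[k] x i ≤ (b : ℝ) * (Tab a b)^[k] x ⟨a + b - 1, by omega⟩ := by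
  by_contra! hnone
  have hb1 : 1 ≤ b := by omega
  set c : ℕ → ℝ := fun k => (Tab a b)^[k] x ⟨a - 1, by omega⟩
  obtain ⟨M, hM, hMle⟩ := exists_pos_le_iterate_Tab_last hb1 hx hnot
  have hc := tendsto_iterate_Tab_pivot ha hb1 hx
  obtain ⟨K, hK⟩ := eventually_atTop.mp <|
    hc.eventually (gt_mem_nhds (show 0 < M / (a + 2) by positivity))
  have hconst : EventuallyConst c atTop := by
    refine eventuallyConst_atTop_nat.mpr ⟨max K 1, fun k hk => ?_⟩
    have hL := iterate_Tab_mem_Lambda hx k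
    have hsmall : (a + 2) * c k ≤ (Tab a b)^[k] x ⟨a + b - 1, by omega⟩ := by
      have := hK k (le_of_max_le_left hk)
      rw [lt_div_iff₀ (by positivity)] at this
      linarith [hMle k]
    simp only [c, Function.iterate_succ_apply']
    exact Tab_pivot_eq_of_lt_sum ha hb1 hL (hnone k (le_of_max_le_right hk) hL) hsmall
  obtain ⟨v, hv⟩ := hconst.eventuallyEq_const
  have hv0 : v = 0 := tendsto_nhds_unique tendsto_const_nhds (hc.congr' hv)
  obtain ⟨k, hk⟩ := hv.exists
  exact (iterate_Tab_linearIndependent ha hind k).ne_zero _ (hk.trans hv0)
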